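/- Let m ≥ 1 and let X ⊆ ℝ^m be a countable conical limit set. Then every subset Y ⊆ X is also a conical limit set. -/

import Mathlib

open Filter Topology

/-- The open upper half-space over a normed space `V`: pairs `(t, v)` with `t > 0`. -/
def upperHalf (V : Type*) [NormedAddCommGroup V] : Set (ℝ × V) := {p | 0 < p.1}

/-- The conical limit set of `E ⊆ ℝ × V`: points `x` for which there are `C > 0` and a
sequence `(t_n, v_n)` in `E` with `t_n → 0`, `v_n → x` and `‖v_n - x‖ ≤ C * t_n`. -/
def conicalLimitSet {V : Type*} [NormedAddCommGroup V] (E : Set (ℝ × V)) : Set V :=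
  {x | ∃ C > 0, ∃ w : ℕ → ℝ × V, (∀ n, w n ∈ E) ∧
    Tendsto (fun n => (w n).1) atTop (𝓝 (0 : ℝ)) ∧
    Tendsto (fun n => (w n).2) atTop (𝓝 x) ∧
    ∀ n, ‖(w n).2 - x‖ ≤ C * (w n).1}

/-- `X ⊆ V` is a conical limit set if it is the conical limit set of some subset of the
upper half-space. -/
def IsConicalLimitSet {V : Type*} [NormedAddCommGroup V] (X : Set V) : Prop :=
  ∃ E ⊆ upperHalf V, conicalLimitSet E = X

/-! Shrink `E` to the union, over `y ∈ Y`, of its parts inside truncated cones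
`{(t, v) | t < τ y, ‖v - y‖ ≤ C y * t}`, where `C y` is the aperture of a conical approach to `y`;
every `y ∈ Y` is still a conical limit point. A point of such a truncated cone that also lies in a
cone `‖v - z‖ ≤ D * t` has `t ≥ ‖z - y‖ / (D + C y)`. So if, for each `z ∈ X \ Y` and each `D`, the
height `τ y` is below that bound for all but finitely many `y`, any conical approach to `z` stays
at positive height. Such heights exist by a diagonal choice over enumerations of the countable
sets `Y` and `X \ Y`. -/

open Set

variable {V : Type*} [NormedAddCommGroup V]

def truncatedCone (y : V) (C τ : ℝ) : Set (ℝ × V) := {p | p.1 < τ ∧ ‖p.2 - y‖ ≤ C * p.1}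

theorem conicalLimitSet_mono {E F : Set (ℝ × V)} (h : E ⊆ F) :
    conicalLimitSet E ⊆ conicalLimitSet F := by
  rintro x ⟨C, hC, w, hwE, hw⟩
  exact ⟨C, hC, w, fun n => h (hwE n), hw⟩

theorem exists_truncatedCone_of_mem_conicalLimitSet {E : Set (ℝ × V)} {x : V}
    (hx : x ∈ conicalLimitSet E) :
    ∃ C > 0, ∀ τ > 0, x ∈ conicalLimitSet (E ∩ truncatedCone x C τ) := by
  obtain ⟨C, hC, w, hwE, hwt, hwv, hwb⟩ := hx
  refine ⟨C, hC, fun τ hτ => ?_⟩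
  obtain ⟨N, hN⟩ := eventually_atTop.1 (hwt.eventually (gt_mem_nhds hτ))
  exact ⟨C, hC, fun n => w (n + N), fun n => ⟨hwE _, hN _ (Nat.le_add_left N n), hwb _⟩,
    (tendsto_add_atTop_iff_nat N).2 hwt, (tendsto_add_atTop_iff_nat N).2 hwv, fun n => hwb _⟩

theorem notMem_conicalLimitSet_iUnion_truncatedCone {ι : Type*} {y : ι → V} {C τ : ι → ℝ}
    {z : V} (hC : ∀ i, 0 ≤ C i) (hz : ∀ i, z ≠ y i)
    (hτ : ∀ D, ∀ᶠ i in cofinite, (D + C i) * τ i ≤ ‖z - y i‖) :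
    z ∉ conicalLimitSet (⋃ i, truncatedCone (y i) (C i) (τ i)) := by
  rintro ⟨Cz, hCz, w, hwF, hwt, -, hwb⟩
  set S := {i | ¬(Cz + C i) * τ i ≤ ‖z - y i‖}
  have hS : S.Finite := eventually_cofinite.1 (hτ Cz)
  have hlow : ∀ᶠ n in atTop, ∀ i ∈ S, (Cz + C i) * (w n).1 < ‖z - y i‖ := by
    refine (eventually_all_finite hS).2 fun i _ => ?_
    have hlim : Tendsto (fun n => (Cz + C i) * (w n).1) atTop (𝓝 0) := by
      simpa using hwt.const_mul (Cz + C i)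
    exact hlim.eventually (gt_mem_nhds (norm_pos_iff.2 (sub_ne_zero.2 (hz i))))
  obtain ⟨n, hn⟩ := hlow.exists
  obtain ⟨i, hi_lt, hi_cone⟩ := mem_iUnion.1 (hwF n)
  have hcap : ‖z - y i‖ ≤ (Cz + C i) * (w n).1 :=
    calc ‖z - y i‖ ≤ ‖z - (w n).2‖ + ‖(w n).2 - y i‖ := norm_sub_le_norm_sub_add_norm_sub _ _ _
      _ ≤ (Cz + C i) * (w n).1 := by rw [norm_sub_rev]; linarith [hwb n]
  by_cases hiS : i ∈ S
  · exact (hn i hiS).not_ge hcap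
  · have hle : (Cz + C i) * τ i ≤ ‖z - y i‖ := not_not.1 hiS
    have hpos : 0 < Cz + C i := by linarith [hC i]
    linarith [mul_lt_mul_of_pos_left hi_lt hpos]

theorem exists_pos_mul_le_norm_sub {s : Set V} (hs : s.Finite) {p : V} (hp : p ∉ s) (a : ℝ) :
    ∃ t > 0, ∀ z ∈ s, a * t ≤ ‖z - p‖ := by
  have hsmall : ∀ᶠ t in 𝓝 (0 : ℝ), ∀ z ∈ s, a * t ≤ ‖z - p‖ := by
    refine (eventually_all_finite hs).2 fun z hz => ?_
    have hlim : Tendsto (fun t : ℝ => a * t) (𝓝 0) (𝓝 0) := by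
      simpa using (continuous_const_mul a).tendsto 0
    have hpos : 0 < ‖z - p‖ := norm_pos_iff.2 (sub_ne_zero.2 (ne_of_mem_of_not_mem hz hp))
    exact (hlim.eventually (gt_mem_nhds hpos)).mono fun _ h => h.le
  obtain ⟨t, ht, htpos⟩ := ((hsmall.filter_mono nhdsWithin_le_nhds).and
    (self_mem_nhdsWithin : ∀ᶠ t in 𝓝[>] (0 : ℝ), 0 < t)).exists
  exact ⟨t, htpos, ht⟩

theorem exists_pos_heights {ι : Type*} [Countable ι] {Z : Set V} (hZ : Z.Countable)
    {y : ι → V} (hyZ : ∀ i, y i ∉ Z) (c : ι → ℝ) :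
    ∃ τ : ι → ℝ, (∀ i, 0 < τ i) ∧ ∀ z ∈ Z, ∀ D, ∀ᶠ i in cofinite, (D + c i) * τ i ≤ ‖z - y i‖ := by
  have : Countable Z := hZ.to_subtype
  obtain ⟨e, he⟩ := exists_injective_nat ι
  obtain ⟨f, hf⟩ := exists_injective_nat Z
  -- `τ i` only respects the finitely many `z` enumerated up to `e i`; `e i` outgrows every `D`
  have hfin : ∀ i, (Subtype.val '' (f ⁻¹' Iic (e i))).Finite := fun i =>
    ((finite_Iic (e i)).preimage hf.injOn).image _
  have hheight : ∀ i, ∃ t > 0, ∀ z ∈ Subtype.val '' (f ⁻¹' Iic (e i)),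
      (e i + c i) * t ≤ ‖z - y i‖ := fun i =>
    exists_pos_mul_le_norm_sub (hfin i) (fun ⟨z, _, hz⟩ => hyZ i (hz ▸ z.2)) _
  choose τ hτ hτle using hheight
  refine ⟨τ, hτ, fun z hz D => ?_⟩
  have hlarge : ∀ᶠ i in cofinite, max (f ⟨z, hz⟩) ⌈D⌉₊ ≤ e i := by
    have he' : Tendsto e cofinite atTop := Nat.cofinite_eq_atTop ▸ he.tendsto_cofinite
    exact he'.eventually_ge_atTop _
  filter_upwards [hlarge] with i hi
  have hD : D ≤ e i := (Nat.le_ceil D).trans (by exact_mod_cast le_of_max_le_right hi)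
  calc (D + c i) * τ i ≤ (e i + c i) * τ i := by gcongr; exact (hτ i).le
    _ ≤ ‖z - y i‖ := hτle i z ⟨⟨z, hz⟩, le_of_max_le_left hi, rfl⟩

theorem IsConicalLimitSet.of_subset_of_countable {X Y : Set V} (hX : IsConicalLimitSet X)
    (hc : X.Countable) (hY : Y ⊆ X) : IsConicalLimitSet Y := by
  obtain ⟨E, hEH, rfl⟩ := hX
  have : Countable Y := (hc.mono hY).to_subtype
  choose C hC hyC using fun y : Y => exists_truncatedCone_of_mem_conicalLimitSet (hY y.2)
  obtain ⟨τ, hτ, hτz⟩ := exists_pos_heights (hc.mono sdiff_subset)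
    (y := ((↑) : Y → V)) (fun y hy => hy.2 y.2) C
  have hE : (⋃ y : Y, E ∩ truncatedCone y (C y) (τ y)) ⊆ E :=
    iUnion_subset fun _ => inter_subset_left
  refine ⟨_, hE.trans hEH, Subset.antisymm (fun z hz => ?_) fun y hy =>
    conicalLimitSet_mono (subset_iUnion (fun y : Y => E ∩ truncatedCone y (C y) (τ y)) ⟨y, hy⟩)
      (hyC ⟨y, hy⟩ _ (hτ _))⟩
  by_contra hzY
  exact notMem_conicalLimitSet_iUnion_truncatedCone (fun y => (hC y).le)
    (fun (y : Y) (hzy : z = y) => hzY (hzy ▸ y.2)) (hτz z ⟨conicalLimitSet_mono hE hz, hzY⟩)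
    (conicalLimitSet_mono (iUnion_mono fun _ => inter_subset_right) hz)

theorem subset_of_countable_conicalLimitSet_general (m : ℕ)
    (X : Set (EuclideanSpace ℝ (Fin m))) (hX : IsConicalLimitSet X)
    (hc : X.Countable) (Y : Set (EuclideanSpace ℝ (Fin m))) (hY : Y ⊆ X) :
    IsConicalLimitSet Y :=
  hX.of_subset_of_countable hc hY

/-- Every subset of a countable conical limit set in `ℝ^m` is a conical limit set. -/
theorem subset_of_countable_conicalLimitSet (m : ℕ) (hm : 1 ≤ m)
    (X : Set (EuclideanSpace ℝ (Fin m))) (hX : IsConicalLimitSet X)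
    (hc : X.Countable) (Y : Set (EuclideanSpace ℝ (Fin m))) (hY : Y ⊆ X) :
    IsConicalLimitSet Y :=
  subset_of_countable_conicalLimitSet_general m X hX hc Y hY
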